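/- Let s_f, s_x > 0, set α = (s_f + 2s_x)/s_f, and define μ_c(x) = α^{n/4}·exp(−‖x‖²/(2s_f)) for x ∈ ℝⁿ. Let w₁,…,w_{n₁} be i.i.d. N(0, I_n) random vectors in ℝⁿ, independent of x ~ N(0, s_x·I_n), and define f_w(x) = (α^{n/4}/n₁)·Σ_{i=1}^{n₁} cos(⟨w_i, x⟩/√s_f). Then E_w[E_x[(f_w(x) − μ_c(x))²]] = (α^{n/2}/(2n₁))·(1 + (s_f/(s_f + 4s_x))^{n/2} − 2·(s_f/(s_f + 2s_x))^{n/2}), and this quantity is strictly less than α^{n/2}/n₁. -/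

import Mathlib

open MeasureTheory

/-- The distribution `N(0, s·Iₙ)` on `ℝⁿ`, given as a density with respect to Lebesgue
measure. -/
noncomputable def gaussMeasure (n : ℕ) (s : ℝ) : Measure (Fin n → ℝ) :=
  MeasureTheory.volume.withDensity fun x =>
    ENNReal.ofReal ((2 * Real.pi * s) ^ (-(n : ℝ) / 2) *
      Real.exp (-(∑ i, (x i) ^ 2) / (2 * s)))

/-- The joint distribution of `n₁` i.i.d. standard Gaussian vectors `w₁,…,w_{n₁} ~ N(0, Iₙ)`,
given as a density with respect to Lebesgue measure on `(ℝⁿ)^{n₁}`. -/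
noncomputable def gaussWMeasure (n₁ n : ℕ) : Measure (Fin n₁ → Fin n → ℝ) :=
  MeasureTheory.volume.withDensity fun W =>
    ENNReal.ofReal ((2 * Real.pi) ^ (-((n₁ * n : ℕ) : ℝ) / 2) *
      Real.exp (-(∑ i, ∑ j, (W i j) ^ 2) / 2))

/-!
Both Gaussian laws are products of one-dimensional `gaussianReal`s. For fixed `x`, the summands
`c · cos ⟨wᵢ, x / √s_f⟩` with `c = α^{n/4}` are i.i.d. with mean `c · exp (-‖x‖² / (2 s_f))`,
which is `μ_c(x)` (the characteristic function of `N(0, Iₙ)`). So `f_w(x)` is an unbiased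
estimator of `μ_c(x)`, and its mean-squared error is the variance
`c² (1 - exp (-‖x‖² / s_f))² / 2` of one summand divided by `n₁`. Averaging over `x` (after
Fubini) leaves the Gaussian integrals `E exp (-a ‖x‖²) = (1 + 2 a s_x)^{-n/2}`.
-/

open ProbabilityTheory
open scoped NNReal ENNReal

theorem MeasureTheory.Measure.pi_withDensity_ofReal {ι : Type*} [Fintype ι] {α : ι → Type*}
    [∀ i, MeasurableSpace (α i)] {μ : ∀ i, Measure (α i)} [∀ i, SigmaFinite (μ i)]
    {g : ∀ i, α i → ℝ} (hg_nonneg : ∀ i x, 0 ≤ g i x) (hg : ∀ i, Integrable (g i) (μ i)) :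
    Measure.pi (fun i => (μ i).withDensity fun y => ENNReal.ofReal (g i y)) =
      (Measure.pi μ).withDensity fun x => ENNReal.ofReal (∏ i, g i (x i)) := by
  have := fun i => isFiniteMeasure_withDensity_ofReal (hg i).hasFiniteIntegral
  refine Measure.pi_eq fun s hs => ?_
  rw [withDensity_apply _ (MeasurableSet.univ_pi hs), Measure.restrict_pi_pi,
    ← ofReal_integral_eq_lintegral_ofReal
      (Integrable.fintype_prod_dep fun i => (hg i).restrict)
      (ae_of_all _ fun x => Finset.prod_nonneg fun i _ => hg_nonneg i (x i)),
    integral_fintype_prod_eq_prod, ENNReal.ofReal_prod_of_nonneg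
      fun i _ => integral_nonneg (hg_nonneg i)]
  refine Finset.prod_congr rfl fun i _ => ?_
  rw [withDensity_apply _ (hs i), ofReal_integral_eq_lintegral_ofReal (hg i).restrict
    (ae_of_all _ (hg_nonneg i))]

theorem gaussMeasure_density_eq_prod {n : ℕ} {s : ℝ} (hs : 0 < s) (x : Fin n → ℝ) :
    (2 * Real.pi * s) ^ (-(n : ℝ) / 2) * Real.exp (-(∑ i, (x i) ^ 2) / (2 * s)) =
      ∏ i, gaussianPDFReal 0 s.toNNReal (x i) := by
  simp only [gaussianPDFReal, Real.coe_toNNReal s hs.le, sub_zero, Finset.prod_mul_distrib,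
    Finset.prod_const, Finset.card_univ, Fintype.card_fin, ← Real.exp_sum, ← Finset.sum_div,
    Finset.sum_neg_distrib]
  rw [Real.sqrt_eq_rpow, ← Real.rpow_neg (by positivity), ← Real.rpow_mul_natCast (by positivity)]
  ring_nf

theorem gaussMeasure_eq_pi {n : ℕ} {s : ℝ} (hs : 0 < s) :
    gaussMeasure n s = Measure.pi fun _ => gaussianReal 0 s.toNNReal := by
  have hv : s.toNNReal ≠ 0 := by simpa using hs
  simp only [gaussianReal_of_var_ne_zero _ hv, gaussianPDF_def]
  rw [Measure.pi_withDensity_ofReal (fun _ => gaussianPDFReal_nonneg 0 _)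
    (fun _ => integrable_gaussianPDFReal 0 _)]
  simp only [gaussMeasure, gaussMeasure_density_eq_prod hs]
  rfl

theorem gaussWMeasure_eq_pi (n₁ n : ℕ) :
    gaussWMeasure n₁ n = Measure.pi fun _ => gaussMeasure n 1 := by
  simp only [gaussMeasure, gaussMeasure_density_eq_prod one_pos]
  rw [Measure.pi_withDensity_ofReal (μ := fun _ => volume) (fun _ _ => Finset.prod_nonneg
    fun _ _ => gaussianPDFReal_nonneg 0 _ _) (fun _ => Integrable.fintype_prod fun _ =>
      integrable_gaussianPDFReal 0 _), ← volume_pi]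
  simp only [gaussWMeasure, ← gaussMeasure_density_eq_prod one_pos, Finset.prod_mul_distrib,
    Finset.prod_const, Finset.card_univ, Fintype.card_fin, ← Real.exp_sum, ← Finset.sum_div,
    Finset.sum_neg_distrib, mul_one]
  rw [← Real.rpow_mul_natCast (by positivity)]
  push_cast
  ring_nf

theorem integral_sq_sampleMean_sub_integral {Ω ι : Type*} [MeasurableSpace Ω] [Fintype ι]
    [Nonempty ι] {μ : Measure Ω} [IsProbabilityMeasure μ] {X : Ω → ℝ} (hX : MemLp X 2 μ) :
    ∫ ω, ((Fintype.card ι : ℝ)⁻¹ * ∑ i, X (ω i) - μ[X]) ^ 2 ∂(Measure.pi fun _ : ι => μ) =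
      Var[X; μ] / Fintype.card ι := by
  set N : ℝ := (Fintype.card ι : ℝ)
  have hN : N ≠ 0 := by positivity
  have hXi : ∀ i, Integrable (fun ω : ι → Ω => X (ω i)) (Measure.pi fun _ => μ) :=
    fun _ => integrable_comp_eval (hX.integrable one_le_two)
  set S : (ι → Ω) → ℝ := ∑ i, fun ω => X (ω i)
  have hS : ∀ ω, S ω = ∑ i, X (ω i) := fun ω => Finset.sum_apply ω _ _
  have hmean : ∫ ω, S ω ∂(Measure.pi fun _ : ι => μ) = N * μ[X] := by
    simp_rw [hS]
    rw [integral_finsetSum _ fun i _ => hXi i, Finset.sum_congr rfl fun i _ =>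
      integral_comp_eval (μ := fun _ => μ) (i := i) hX.aestronglyMeasurable]
    simp [N]
  have hvar : Var[S; Measure.pi fun _ : ι => μ] = N * Var[X; μ] := by
    rw [variance_sum_pi (X := fun _ => X) fun _ => hX]
    simp [N]
  calc ∫ ω, (N⁻¹ * ∑ i, X (ω i) - μ[X]) ^ 2 ∂(Measure.pi fun _ : ι => μ)
      = (N⁻¹) ^ 2 * ∫ ω, (S ω - ∫ ω', S ω' ∂(Measure.pi fun _ : ι => μ)) ^ 2
          ∂(Measure.pi fun _ : ι => μ) := by
        rw [← integral_const_mul]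
        congr with ω
        rw [hS, hmean]
        field_simp
    _ = Var[X; μ] / N := by
        rw [← variance_eq_integral (Finset.aemeasurable_sum _ fun i _ => (hXi i).aemeasurable),
          hvar]
        field_simp

theorem memLp_cos_sum_mul {ι : Type*} [Fintype ι] (μ : Measure (ι → ℝ)) [IsFiniteMeasure μ]
    (t : ι → ℝ) (p : ℝ≥0∞) : MemLp (fun w => Real.cos (∑ j, w j * t j)) p μ :=
  .of_bound (Continuous.aestronglyMeasurable (by fun_prop)) 1
    (ae_of_all _ fun _ => Real.abs_cos_le_one _)

theorem integral_cos_sum_mul_pi_gaussianReal {ι : Type*} [Fintype ι] (v : ℝ≥0) (t : ι → ℝ) :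
    ∫ w, Real.cos (∑ j, w j * t j) ∂(Measure.pi fun _ : ι => gaussianReal 0 v) =
      Real.exp (-(v * ∑ j, t j ^ 2) / 2) := by
  have hchar : ∀ j, ∫ y, Complex.exp (y * t j * Complex.I) ∂gaussianReal 0 v =
      Real.exp (-(v * t j ^ 2) / 2) := fun j => by
    simp_rw [mul_comm _ (t j : ℂ)]
    rw [← charFun_apply_real, charFun_gaussianReal]
    push_cast
    ring_nf
  have hint : Integrable (fun w : ι → ℝ => Complex.exp ((∑ j, w j * t j : ℝ) * Complex.I))
      (Measure.pi fun _ => gaussianReal 0 v) :=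
    (integrable_const (1 : ℝ)).mono' (Continuous.aestronglyMeasurable (by fun_prop))
      (ae_of_all _ fun w => by rw [Complex.norm_exp_ofReal_mul_I])
  calc ∫ w, Real.cos (∑ j, w j * t j) ∂(Measure.pi fun _ : ι => gaussianReal 0 v)
      = (∫ w, Complex.exp ((∑ j, w j * t j : ℝ) * Complex.I)
          ∂(Measure.pi fun _ : ι => gaussianReal 0 v)).re := by
        simp_rw [← RCLike.re_to_complex, ← integral_re hint, RCLike.re_to_complex,
          Complex.exp_ofReal_mul_I_re]
    _ = (∏ j, ∫ y, Complex.exp (y * t j * Complex.I) ∂gaussianReal 0 v).re := by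
        rw [← integral_fintype_prod_eq_prod]
        push_cast
        simp_rw [Finset.sum_mul, Complex.exp_sum]
    _ = Real.exp (-(v * ∑ j, t j ^ 2) / 2) := by
        simp_rw [hchar, ← Complex.ofReal_prod, Complex.ofReal_re, ← Real.exp_sum]
        rw [Finset.mul_sum, ← Finset.sum_neg_distrib, Finset.sum_div]

theorem variance_cos_sum_mul_pi_gaussianReal {ι : Type*} [Fintype ι] (v : ℝ≥0) (t : ι → ℝ) :
    Var[fun w => Real.cos (∑ j, w j * t j); Measure.pi fun _ : ι => gaussianReal 0 v] =
      (1 - Real.exp (-(v * ∑ j, t j ^ 2))) ^ 2 / 2 := by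
  have hsq : ∀ w : ι → ℝ, Real.cos (∑ j, w j * t j) ^ 2 =
      1 / 2 + Real.cos (∑ j, w j * (2 * t j)) / 2 := fun w => by
    rw [Real.cos_sq, Finset.mul_sum]
    simp_rw [mul_left_comm]
  rw [variance_eq_sub (memLp_cos_sum_mul _ t 2)]
  simp only [Pi.pow_apply, hsq]
  rw [integral_add (integrable_const _) (((memLp_cos_sum_mul _ _ 1).integrable le_rfl).div_const 2)]
  simp only [integral_const, probReal_univ, smul_eq_mul, one_mul, integral_div,
    integral_cos_sum_mul_pi_gaussianReal]
  set Q := (v : ℝ) * ∑ j, t j ^ 2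
  have hexp_double : Real.exp (-(v * ∑ j, (2 * t j) ^ 2) / 2) = Real.exp (-Q) ^ 2 := by
    rw [← Real.exp_nat_mul]; congr 1
    simp only [Q, mul_pow, ← Finset.mul_sum]; push_cast; ring
  have hexp_half : Real.exp (-Q / 2) ^ 2 = Real.exp (-Q) := by
    rw [← Real.exp_nat_mul]; congr 1; push_cast; ring
  rw [hexp_double, hexp_half]
  ring

theorem integral_sq_cosFeatures_sub_exp {ι : Type*} [Fintype ι] {N : ℕ} (hN : 0 < N) (v : ℝ≥0)
    (c : ℝ) (t : ι → ℝ) :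
    ∫ W, (c / N * ∑ i, Real.cos (∑ j, W i j * t j) - c * Real.exp (-(v * ∑ j, t j ^ 2) / 2)) ^ 2
        ∂(Measure.pi fun _ : Fin N => Measure.pi fun _ : ι => gaussianReal 0 v) =
      c ^ 2 * (1 - Real.exp (-(v * ∑ j, t j ^ 2))) ^ 2 / (2 * N) := by
  have : Nonempty (Fin N) := Fin.pos_iff_nonempty.mp hN
  have hX : MemLp (fun w : ι → ℝ => c * Real.cos (∑ j, w j * t j)) 2
      (Measure.pi fun _ : ι => gaussianReal 0 v) := (memLp_cos_sum_mul _ t 2).const_mul c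
  have hmse := integral_sq_sampleMean_sub_integral (ι := Fin N) hX
  simp only [Fintype.card_fin, integral_const_mul, integral_cos_sum_mul_pi_gaussianReal,
    variance_const_mul, variance_cos_sum_mul_pi_gaussianReal] at hmse
  calc _ = ∫ W, ((N : ℝ)⁻¹ * ∑ i, c * Real.cos (∑ j, W i j * t j) -
          c * Real.exp (-(v * ∑ j, t j ^ 2) / 2)) ^ 2
        ∂(Measure.pi fun _ : Fin N => Measure.pi fun _ : ι => gaussianReal 0 v) := by
        simp_rw [← Finset.mul_sum, div_eq_inv_mul, mul_assoc]
    _ = _ := by rw [hmse]; ring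

-- For `1 + 2 * a * v ≤ 0` the integral diverges and both sides are junk zeros.
theorem integral_exp_neg_mul_sq_gaussianReal {v : ℝ≥0} (hv : v ≠ 0) (a : ℝ) :
    ∫ y, Real.exp (-a * y ^ 2) ∂gaussianReal 0 v = √((1 + 2 * a * v)⁻¹) := by
  have hv' : (0 : ℝ) < v := by positivity
  rw [integral_gaussianReal_eq_integral_smul hv]
  calc ∫ y, gaussianPDFReal 0 v y • Real.exp (-a * y ^ 2)
      = ∫ y, (√(2 * Real.pi * v))⁻¹ * Real.exp (-((2 * (v : ℝ))⁻¹ + a) * y ^ 2) := by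
        congr with y
        rw [gaussianPDFReal, smul_eq_mul, mul_assoc, ← Real.exp_add]
        ring_nf
    _ = √((1 + 2 * a * v)⁻¹) := by
        rw [integral_const_mul, integral_gaussian, ← Real.sqrt_inv, ← Real.sqrt_mul (by positivity)]
        congr 1
        field_simp

theorem integral_exp_neg_mul_sum_sq_pi_gaussianReal {ι : Type*} [Fintype ι] {v : ℝ≥0}
    (hv : v ≠ 0) (a : ℝ) :
    ∫ x, Real.exp (-a * ∑ i, x i ^ 2) ∂(Measure.pi fun _ : ι => gaussianReal 0 v) =
      √((1 + 2 * a * v)⁻¹) ^ Fintype.card ι := by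
  simp_rw [Finset.mul_sum, Real.exp_sum]
  rw [integral_fintype_prod_eq_pow (fun y => Real.exp (-a * y ^ 2)),
    integral_exp_neg_mul_sq_gaussianReal hv]

theorem integral_one_sub_exp_sq_pi_gaussianReal {n : ℕ} {s : ℝ} (hs : 0 < s) {v : ℝ≥0}
    (hv : v ≠ 0) :
    ∫ x, (1 - Real.exp (-(∑ i, x i ^ 2) / s)) ^ 2 ∂(Measure.pi fun _ : Fin n => gaussianReal 0 v) =
      1 + (s / (s + 4 * v)) ^ ((n : ℝ) / 2) - 2 * (s / (s + 2 * v)) ^ ((n : ℝ) / 2) := by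
  have hint : ∀ a : ℝ, 0 ≤ a → Integrable (fun x : Fin n → ℝ => Real.exp (-a * ∑ i, x i ^ 2))
      (Measure.pi fun _ => gaussianReal 0 v) := fun a ha =>
    .of_bound (Continuous.aestronglyMeasurable (by fun_prop)) 1 (ae_of_all _ fun x => by
      rw [Real.norm_eq_abs, Real.abs_exp, Real.exp_le_one_iff]
      exact mul_nonpos_of_nonpos_of_nonneg (neg_nonpos.2 ha) (by positivity))
  have hexpand : ∀ x : Fin n → ℝ, (1 - Real.exp (-(∑ i, x i ^ 2) / s)) ^ 2 =
      1 + Real.exp (-(2 / s) * ∑ i, x i ^ 2) - 2 * Real.exp (-(1 / s) * ∑ i, x i ^ 2) :=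
    fun x => by
    rw [sub_sq, ← Real.exp_nat_mul]
    ring_nf
  simp_rw [hexpand]
  rw [integral_sub ((integrable_const 1).fun_add (hint _ (by positivity)))
      ((hint _ (by positivity)).const_mul 2),
    integral_add (integrable_const 1) (hint _ (by positivity)),
    integral_const_mul, integral_exp_neg_mul_sum_sq_pi_gaussianReal hv,
    integral_exp_neg_mul_sum_sq_pi_gaussianReal hv, Fintype.card_fin,
    ← Real.rpow_natCast, ← Real.rpow_natCast,
    ← Real.rpow_div_two_eq_sqrt _ (by positivity), ← Real.rpow_div_two_eq_sqrt _ (by positivity)]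
  simp only [integral_const, probReal_univ, smul_eq_mul, mul_one]
  congr 4
  · field_simp; ring
  · field_simp

theorem abs_div_mul_sum_cos_le {N : ℕ} (c : ℝ) (θ : Fin N → ℝ) :
    |c / N * ∑ i, Real.cos (θ i)| ≤ |c| := by
  rcases N.eq_zero_or_pos with rfl | hN
  · simp
  rw [abs_mul, abs_div, Nat.abs_cast]
  calc |c| / N * |∑ i, Real.cos (θ i)| ≤ |c| / N * N := by
        gcongr
        refine (Finset.abs_sum_le_sum_abs _ _).trans ?_
        exact (Finset.sum_le_sum fun i _ => Real.abs_cos_le_one (θ i)).trans_eq (by simp)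
    _ = |c| := by field_simp

theorem integrable_sq_cosFeatures_sub {n N : ℕ}
    {μ : Measure ((Fin N → Fin n → ℝ) × (Fin n → ℝ))} [IsFiniteMeasure μ] (c s : ℝ) :
    Integrable (Function.uncurry fun (W : Fin N → Fin n → ℝ) (x : Fin n → ℝ) =>
      (c / N * ∑ i, Real.cos (∑ j, W i j * (x j / √s)) -
        c * Real.exp (-(∑ j, (x j / √s) ^ 2) / 2)) ^ 2) μ := by
  refine .of_bound (Continuous.aestronglyMeasurable ?_) ((2 * |c|) ^ 2) (ae_of_all _ fun p => ?_)
  · fun_prop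
  · have hexp : |c * Real.exp (-(∑ j, (p.2 j / √s) ^ 2) / 2)| ≤ |c| := by
      rw [abs_mul, Real.abs_exp]
      refine mul_le_of_le_one_right (abs_nonneg c) (Real.exp_le_one_iff.2 ?_)
      have : 0 ≤ ∑ j, (p.2 j / √s) ^ 2 := by positivity
      linarith
    rw [Function.uncurry_apply_pair, Real.norm_eq_abs, abs_pow]
    gcongr
    exact (abs_sub _ _).trans
      (by linarith [abs_div_mul_sum_cos_le c fun i => ∑ j, p.1 i j * (p.2 j / √s)])

theorem integral_integral_sq_cosFeatures_sub {n N : ℕ} (hN : 0 < N) {s v : ℝ} (hs : 0 < s)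
    (hv : 0 < v) (c : ℝ) :
    ∫ W, ∫ x, (c / N * ∑ i, Real.cos ((∑ j, W i j * x j) / √s) -
        c * Real.exp (-(∑ i, x i ^ 2) / (2 * s))) ^ 2 ∂gaussMeasure n v ∂gaussWMeasure N n =
      c ^ 2 / (2 * N) *
        (1 + (s / (s + 4 * v)) ^ ((n : ℝ) / 2) - 2 * (s / (s + 2 * v)) ^ ((n : ℝ) / 2)) := by
  have hsum : ∀ x : Fin n → ℝ, ∑ j, (x j / √s) ^ 2 = (∑ j, x j ^ 2) / s := fun x => by
    simp_rw [div_pow, Real.sq_sqrt hs.le, Finset.sum_div]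
  have hrescale : ∀ (W : Fin N → Fin n → ℝ) (x : Fin n → ℝ),
      (c / N * ∑ i, Real.cos ((∑ j, W i j * x j) / √s) -
        c * Real.exp (-(∑ i, x i ^ 2) / (2 * s))) ^ 2 =
      (c / N * ∑ i, Real.cos (∑ j, W i j * (x j / √s)) -
        c * Real.exp (-(∑ j, (x j / √s) ^ 2) / 2)) ^ 2 := fun W x => by
    rw [hsum]
    congr 2
    · simp_rw [Finset.sum_div, mul_div_assoc]
    · ring_nf
  have hmse := fun t : Fin n → ℝ => integral_sq_cosFeatures_sub_exp hN 1 c t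
  simp only [NNReal.coe_one, one_mul] at hmse
  rw [gaussWMeasure_eq_pi, gaussMeasure_eq_pi hv, gaussMeasure_eq_pi one_pos, Real.toNNReal_one]
  simp_rw [hrescale]
  rw [integral_integral_swap (integrable_sq_cosFeatures_sub c s)]
  simp_rw [hmse, hsum, ← neg_div]
  rw [integral_div, integral_const_mul,
    integral_one_sub_exp_sq_pi_gaussianReal hs (by simpa using hv), Real.coe_toNNReal _ hv.le]
  ring

/-- Mean-squared error of the random-feature network: for i.i.d. weights `wᵢ ~ N(0, Iₙ)`
independent of `x ~ N(0, s_x·Iₙ)`, the network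
`f_w(x) = (α^{n/4}/n₁)·Σᵢ cos(⟨wᵢ,x⟩/√s_f)` with `α = (s_f+2s_x)/s_f` satisfies
`E_w[E_x[(f_w(x) − μ_c(x))²]] = (α^{n/2}/(2n₁))·(1 + (s_f/(s_f+4s_x))^{n/2} −
2(s_f/(s_f+2s_x))^{n/2})`, and this quantity is strictly less than `α^{n/2}/n₁`. -/
theorem stmt15 (n n₁ : ℕ) (hn₁ : 0 < n₁)
    (sf sx α : ℝ) (hsf : 0 < sf) (hsx : 0 < sx)
    (hα : α = (sf + 2 * sx) / sf)
    (μc : (Fin n → ℝ) → ℝ)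
    (hμc : ∀ x, μc x = α ^ ((n : ℝ) / 4) *
      Real.exp (-(∑ i, (x i) ^ 2) / (2 * sf)))
    (fw : (Fin n₁ → Fin n → ℝ) → (Fin n → ℝ) → ℝ)
    (hfw : ∀ W x, fw W x = α ^ ((n : ℝ) / 4) / n₁ *
      ∑ i, Real.cos ((∑ j, W i j * x j) / Real.sqrt sf)) :
    (∫ W, (∫ x, (fw W x - μc x) ^ 2 ∂(gaussMeasure n sx)) ∂(gaussWMeasure n₁ n) =
      α ^ ((n : ℝ) / 2) / (2 * n₁) *
        (1 + (sf / (sf + 4 * sx)) ^ ((n : ℝ) / 2) -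
          2 * (sf / (sf + 2 * sx)) ^ ((n : ℝ) / 2))) ∧
    α ^ ((n : ℝ) / 2) / (2 * n₁) *
        (1 + (sf / (sf + 4 * sx)) ^ ((n : ℝ) / 2) -
          2 * (sf / (sf + 2 * sx)) ^ ((n : ℝ) / 2)) <
      α ^ ((n : ℝ) / 2) / n₁ := by
  have hα_pos : 0 < α := by rw [hα]; positivity
  have hc : (α ^ ((n : ℝ) / 4)) ^ 2 = α ^ ((n : ℝ) / 2) := by
    rw [← Real.rpow_natCast, ← Real.rpow_mul hα_pos.le]
    ring_nf
  refine ⟨?_, ?_⟩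
  · simp_rw [hfw, hμc]
    rw [integral_integral_sq_cosFeatures_sub hn₁ hsf hsx, hc]
  · have : (sf / (sf + 4 * sx)) ^ ((n : ℝ) / 2) ≤ 1 :=
      Real.rpow_le_one (by positivity) ((div_le_one (by positivity)).2 (by linarith))
        (by positivity)
    have : 0 < (sf / (sf + 2 * sx)) ^ ((n : ℝ) / 2) := by positivity
    calc α ^ ((n : ℝ) / 2) / (2 * n₁) *
          (1 + (sf / (sf + 4 * sx)) ^ ((n : ℝ) / 2) - 2 * (sf / (sf + 2 * sx)) ^ ((n : ℝ) / 2))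
        < α ^ ((n : ℝ) / 2) / (2 * n₁) * 2 := by gcongr; linarith
      _ = α ^ ((n : ℝ) / 2) / n₁ := by field_simp
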